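/- Let X be a finite set and let A be a subgroup of Sym(X). Then A is abelian if and only if any two permutations of X that are 2-orbit-compatible with A commute (equivalently, the 2-orbit-closure of A, which is a subgroup of Sym(X) containing A, is abelian). -/
import Mathlib


/-- The orbit of a point `x` under a set `G` of permutations of `X`. -/
def orbitOf {X : Type*} (G : Set (Equiv.Perm X)) (x : X) : Set X :=
  {y | ∃ a ∈ G, a x = y}

/-- A permutation `σ` is 2-orbit-compatible with `G` if for every pair of orbits
`O` and `Q` of `G` there is an element of `G` agreeing with `σ` on `O ∪ Q`. -/
def TwoOrbitCompatible {X : Type*} (G : Set (Equiv.Perm X)) (σ : Equiv.Perm X) : Prop :=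
  ∀ x y : X, ∃ a ∈ G, ∀ z ∈ orbitOf G x ∪ orbitOf G y, σ z = a z

/-- A subgroup `A ≤ Sym(X)` is 2-orbit-closed if every permutation that is
2-orbit-compatible with `A` belongs to `A`. -/
def TwoOrbitClosed {X : Type*} (A : Subgroup (Equiv.Perm X)) : Prop :=
  ∀ σ : Equiv.Perm X, TwoOrbitCompatible (A : Set (Equiv.Perm X)) σ → σ ∈ A

/-- A subgroup `A ≤ Sym(X)` is abelian iff any two permutations of `X` that are
2-orbit-compatible with `A` commute (i.e. the 2-orbit-closure of `A` is abelian). -/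
theorem statement7 (X : Type*) [Fintype X] (A : Subgroup (Equiv.Perm X)) :
    (∀ a ∈ A, ∀ b ∈ A, a * b = b * a) ↔
      ∀ σ τ : Equiv.Perm X, TwoOrbitCompatible (A : Set (Equiv.Perm X)) σ →
        TwoOrbitCompatible (A : Set (Equiv.Perm X)) τ → σ * τ = τ * σ := by
  constructor
  · intro hA σ τ hσ hτ
    ext z
    obtain ⟨a, haA, ha⟩ := hτ z z
    obtain ⟨b, hbA, hb⟩ := hσ z z
    have hz : z ∈ orbitOf (A : Set (Equiv.Perm X)) z ∪ orbitOf (A : Set (Equiv.Perm X)) z :=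
      Or.inl ⟨1, A.one_mem, rfl⟩
    have haz : a z ∈ orbitOf (A : Set (Equiv.Perm X)) z ∪ orbitOf (A : Set (Equiv.Perm X)) z :=
      Or.inl ⟨a, haA, rfl⟩
    have hbz : b z ∈ orbitOf (A : Set (Equiv.Perm X)) z ∪ orbitOf (A : Set (Equiv.Perm X)) z :=
      Or.inl ⟨b, hbA, rfl⟩
    have h1 : σ (τ z) = b (a z) := by rw [ha z hz, hb _ haz]
    have h2 : τ (σ z) = a (b z) := by rw [hb z hz, ha _ hbz]
    have hab : (b * a) z = (a * b) z := by rw [hA b hbA a haA]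
    simp only [Equiv.Perm.mul_apply] at hab ⊢
    rw [h1, h2, hab]
  · intro h a ha b hb
    exact h a b (fun x y => ⟨a, ha, fun z _ => rfl⟩) (fun x y => ⟨b, hb, fun z _ => rfl⟩)
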